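/- Let a, b, c be real numbers with b ≠ 0, and let a₀, a₁ : ℝ → ℝ be continuously differentiable. Define φ(x̄) = (x̄ − c(1 + a·x̄))/(b(1 + a·x̄)), t(x̄) = 1 + a·x̄, ā₁(x̄) = a₁(φ(x̄))/(b³ t(x̄)⁶), and ā₀(x̄) = a₀(φ(x̄))/(b⁴ t(x̄)⁸) − 3a·a₁(φ(x̄))/(b³ t(x̄)⁷) on {x̄ : t(x̄) ≠ 0}. Then for every x̄ with t(x̄) ≠ 0 and a₁(φ(x̄)) ≠ 0, one has (ā₀′(x̄) − ā₀(x̄)(ā₀(x̄) + 3ā₁′(x̄))/(3ā₁(x̄)))³/ā₁(x̄)⁵ = (a₀′ − a₀(a₀ + 3a₁′)/(3a₁))³/a₁⁵ evaluated at φ(x̄). -/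

import Mathlib

/-!
With `t = 1 + a x̄`, the change of variables has `φ′ = 1 / (b t²)`, so by the chain rule the
transformed coefficients and their derivatives are explicit rational expressions in `t`, `b`
and the values of `a₀, a₁, a₀′, a₁′` at `φ(x̄)`.  The numerator `a₀′ − a₀ (a₀ + 3 a₁′) / (3 a₁)`
is a relative invariant of weight 5 in `s = b t²` and `a₁` one of weight 3, so their
ratio `(…)³ / a₁⁵` is absolute.
-/

/-- The point transformation of the independent variable:
`φ(x̄) = (x̄ − c(1 + a x̄)) / (b(1 + a x̄))`. -/
noncomputable def phi (a b c : ℝ) (x : ℝ) : ℝ :=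
  (x - c * (1 + a * x)) / (b * (1 + a * x))

/-- The transformed coefficient `ā₁(x̄) = a₁(φ(x̄)) / (b³ (1 + a x̄)⁶)`
for the canonical form `y⁽⁴⁾ + a₁ y′ + a₀ y = 0`. -/
noncomputable def abar1 (a b c : ℝ) (a1 : ℝ → ℝ) (x : ℝ) : ℝ :=
  a1 (phi a b c x) / (b ^ 3 * (1 + a * x) ^ 6)

/-- The transformed coefficient
`ā₀(x̄) = a₀(φ(x̄))/(b⁴ (1+a x̄)⁸) − 3a a₁(φ(x̄))/(b³ (1+a x̄)⁷)`
for the canonical form `y⁽⁴⁾ + a₁ y′ + a₀ y = 0`. -/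
noncomputable def abar0 (a b c : ℝ) (a0 a1 : ℝ → ℝ) (x : ℝ) : ℝ :=
  a0 (phi a b c x) / (b ^ 4 * (1 + a * x) ^ 8)
    - 3 * a * a1 (phi a b c x) / (b ^ 3 * (1 + a * x) ^ 7)

section Derivatives

variable {a b c x : ℝ}

theorem hasDerivAt_const_mul_one_add_mul_pow (k : ℝ) (n : ℕ) :
    HasDerivAt (fun x : ℝ => k * (1 + a * x) ^ n) (k * (n * (1 + a * x) ^ (n - 1) * a)) x := by
  have ht : HasDerivAt (fun x : ℝ => 1 + a * x) a x := by
    simpa using ((hasDerivAt_id x).const_mul a).const_add 1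
  exact (ht.pow n).const_mul k

theorem hasDerivAt_phi (hb : b ≠ 0) (hx : 1 + a * x ≠ 0) :
    HasDerivAt (phi a b c) (1 / (b * (1 + a * x) ^ 2)) x := by
  have hden := hasDerivAt_const_mul_one_add_mul_pow (a := a) (x := x) b 1
  have hnum := (hasDerivAt_id' x).sub (hasDerivAt_const_mul_one_add_mul_pow (a := a) (x := x) c 1)
  simp only [pow_one] at hden hnum
  refine (hnum.div hden (mul_ne_zero hb hx)).congr_deriv ?_
  simp only [Pi.sub_apply]
  field_simp
  ring

theorem hasDerivAt_abar1 {a1 : ℝ → ℝ} {d1 : ℝ} (hb : b ≠ 0) (hx : 1 + a * x ≠ 0)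
    (h1 : HasDerivAt a1 d1 (phi a b c x)) :
    HasDerivAt (abar1 a b c a1)
      (d1 / (b ^ 4 * (1 + a * x) ^ 8) - 6 * a * a1 (phi a b c x) / (b ^ 3 * (1 + a * x) ^ 7))
      x := by
  refine ((h1.comp x (hasDerivAt_phi hb hx)).div (hasDerivAt_const_mul_one_add_mul_pow _ 6)
    (by positivity)).congr_deriv ?_
  push_cast [Function.comp_apply]
  field_simp

theorem hasDerivAt_abar0 {a0 a1 : ℝ → ℝ} {d0 d1 : ℝ} (hb : b ≠ 0) (hx : 1 + a * x ≠ 0)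
    (h0 : HasDerivAt a0 d0 (phi a b c x)) (h1 : HasDerivAt a1 d1 (phi a b c x)) :
    HasDerivAt (abar0 a b c a0 a1)
      (d0 / (b ^ 5 * (1 + a * x) ^ 10)
        - a * (8 * a0 (phi a b c x) + 3 * d1) / (b ^ 4 * (1 + a * x) ^ 9)
        + 21 * a ^ 2 * a1 (phi a b c x) / (b ^ 3 * (1 + a * x) ^ 8)) x := by
  have hphi := hasDerivAt_phi (c := c) hb hx
  refine (((h0.comp x hphi).div (hasDerivAt_const_mul_one_add_mul_pow _ 8) (by positivity)).sub
    (((h1.comp x hphi).const_mul (3 * a)).div (hasDerivAt_const_mul_one_add_mul_pow _ 7)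
      (by positivity))).congr_deriv ?_
  push_cast [Function.comp_apply]
  field_simp
  ring

end Derivatives

theorem relative_invariant_transform {a b T A0 A1 D0 D1 A0' A1' D0' D1' : ℝ}
    (hb : b ≠ 0) (hT : T ≠ 0) (hA1 : A1 ≠ 0)
    (hA0' : A0' = A0 / (b ^ 4 * T ^ 8) - 3 * a * A1 / (b ^ 3 * T ^ 7))
    (hA1' : A1' = A1 / (b ^ 3 * T ^ 6))
    (hD0' : D0' = D0 / (b ^ 5 * T ^ 10) - a * (8 * A0 + 3 * D1) / (b ^ 4 * T ^ 9)
        + 21 * a ^ 2 * A1 / (b ^ 3 * T ^ 8))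
    (hD1' : D1' = D1 / (b ^ 4 * T ^ 8) - 6 * a * A1 / (b ^ 3 * T ^ 7)) :
    D0' - A0' * (A0' + 3 * D1') / (3 * A1') =
      (D0 - A0 * (A0 + 3 * D1) / (3 * A1)) / (b * T ^ 2) ^ 5 := by
  subst hA0' hA1' hD0' hD1'
  field_simp
  ring

/-- the invariant `Ψ₄^{1,2} = (a₀′ − a₀(a₀ + 3a₁′)/(3a₁))³ / a₁⁵`
of the canonical form `y⁽⁴⁾ + a₁ y′ + a₀ y = 0` is an absolute invariant of the
structure invariance group. -/
theorem stmt_14 (a b c : ℝ) (hb : b ≠ 0) (a0 a1 : ℝ → ℝ)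
    (ha0 : ContDiff ℝ 1 a0) (ha1 : ContDiff ℝ 1 a1) :
    ∀ xb : ℝ, 1 + a * xb ≠ 0 → a1 (phi a b c xb) ≠ 0 →
      (deriv (abar0 a b c a0 a1) xb
          - abar0 a b c a0 a1 xb
              * (abar0 a b c a0 a1 xb + 3 * deriv (abar1 a b c a1) xb)
              / (3 * abar1 a b c a1 xb)) ^ 3
        / (abar1 a b c a1 xb) ^ 5
      = (deriv a0 (phi a b c xb)
          - a0 (phi a b c xb)
              * (a0 (phi a b c xb) + 3 * deriv a1 (phi a b c xb))
              / (3 * a1 (phi a b c xb))) ^ 3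
        / (a1 (phi a b c xb)) ^ 5 := by
  intro x hx hA1
  have h0 := (ha0.differentiable one_ne_zero (phi a b c x)).hasDerivAt
  have h1 := (ha1.differentiable one_ne_zero (phi a b c x)).hasDerivAt
  rw [(hasDerivAt_abar0 hb hx h0 h1).deriv, (hasDerivAt_abar1 hb hx h1).deriv]
  simp only [abar0, abar1]
  rw [relative_invariant_transform hb hx hA1 rfl rfl rfl rfl]
  field_simp
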